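/- arXiv:2208.02803 — 3 statements merged into one kernel-verified Lean document; each statement's English description precedes it below -/
import Mathlib

section
/- Let f_1, …, f_N ∈ ℝ^d be feature vectors satisfying ‖f_i‖₂ ≤ c for all i, let W ∈ ℝ^{C×d} be a weight matrix, and define the logit vectors s_i = W f_i ∈ ℝ^C. Let P = U Uᵀ be the orthogonal projection of ℝ^d onto the column span of the feature matrix [f_1, …, f_N] (where U comes from its singular value decomposition U Σ Vᵀ). Then for all indices i, j: ‖s_i − s_j‖₂² − 4c²‖P − WᵀW‖ ≤ ‖f_i − f_j‖₂² ≤ ‖s_i − s_j‖₂² + 4c²‖P − WᵀW‖, where ‖·‖ on the d×d matrix P − WᵀW denotes the spectral (operator) norm. -/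
open scoped RealInnerProductSpace

/-- Feature vectors `f 1, …, f N` in `ℝ^d` with `‖f i‖ ≤ c`, a weight
matrix `W ∈ ℝ^{C×d}`, logits `s i = W (f i)`, and `P` the orthogonal projection of `ℝ^d`
onto the column span of the feature matrix (i.e. the span of the `f i`).  Then the squared
logit distances approximate the squared feature distances up to `4 c² ‖P − WᵀW‖`, where
`‖·‖` is the spectral (ℓ²-operator) norm. -/
theorem logits_approximate_feature_distances
    {d C N : ℕ} (c : ℝ)
    (f : Fin N → EuclideanSpace ℝ (Fin d))
    (hf : ∀ i, ‖f i‖ ≤ c)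
    (W : Matrix (Fin C) (Fin d) ℝ)
    (s : Fin N → EuclideanSpace ℝ (Fin C))
    (hs : ∀ i, s i = Matrix.toEuclideanLin W (f i))
    (K : Submodule ℝ (EuclideanSpace ℝ (Fin d)))
    (hK : K = Submodule.span ℝ (Set.range f))
    (P : EuclideanSpace ℝ (Fin d) →L[ℝ] EuclideanSpace ℝ (Fin d))
    (hP : P = K.subtypeL.comp (Submodule.orthogonalProjectionOnto K))
    (i j : Fin N) :
    ‖s i - s j‖ ^ 2
        - 4 * c ^ 2 * ‖P - Matrix.toEuclideanCLM (𝕜 := ℝ) (W.transpose * W)‖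
      ≤ ‖f i - f j‖ ^ 2 ∧
    ‖f i - f j‖ ^ 2
      ≤ ‖s i - s j‖ ^ 2
        + 4 * c ^ 2 * ‖P - Matrix.toEuclideanCLM (𝕜 := ℝ) (W.transpose * W)‖ := by
  set v : EuclideanSpace ℝ (Fin d) := f i - f j with hv
  set E := P - Matrix.toEuclideanCLM (𝕜 := ℝ) (W.transpose * W) with hE
  -- v ∈ K
  have hvK : v ∈ K := by
    rw [hK]
    exact sub_mem (Submodule.subset_span ⟨i, rfl⟩) (Submodule.subset_span ⟨j, rfl⟩)
  have hPv : P v = v := by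
    rw [hP]
    exact Submodule.starProjection_eq_self_iff.mpr hvK
  -- key identity
  have hsij : s i - s j = Matrix.toEuclideanLin W v := by
    rw [hs i, hs j, hv, map_sub]
  have hWtW : (Matrix.toEuclideanCLM (𝕜 := ℝ) (W.transpose * W)) v
      = Matrix.toEuclideanLin (W.transpose * W) v := by
    rw [← Matrix.coe_toEuclideanCLM_eq_toEuclideanLin]
    rfl
  have hadj : ⟪v, Matrix.toEuclideanLin (W.transpose * W) v⟫ = ‖s i - s j‖ ^ 2 := by
    have h1 : Matrix.toEuclideanLin (W.transpose * W) v
        = Matrix.toEuclideanLin W.transpose (Matrix.toEuclideanLin W v) := by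
      simp [Matrix.toEuclideanLin_apply, Matrix.mulVec_mulVec]
    have h2 : (W.transpose : Matrix (Fin d) (Fin C) ℝ) = W.conjTranspose := by
      ext a b; simp [Matrix.conjTranspose]
    rw [h1, h2, Matrix.toEuclideanLin_conjTranspose_eq_adjoint,
      LinearMap.adjoint_inner_right, hsij, real_inner_self_eq_norm_sq]
  have key : ‖v‖ ^ 2 - ‖s i - s j‖ ^ 2 = ⟪v, E v⟫ := by
    have : ⟪v, P v⟫ = ‖v‖ ^ 2 := by rw [hPv, real_inner_self_eq_norm_sq]
    rw [hE]
    simp only [ContinuousLinearMap.sub_apply, inner_sub_right, this, hWtW, hadj]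
  -- bounds
  have hc0 : 0 ≤ c := le_trans (norm_nonneg _) (hf i)
  have hvnorm : ‖v‖ ≤ 2 * c := by
    calc ‖v‖ ≤ ‖f i‖ + ‖f j‖ := norm_sub_le _ _
    _ ≤ c + c := add_le_add (hf i) (hf j)
    _ = 2 * c := by ring
  have habs : |⟪v, E v⟫| ≤ 4 * c ^ 2 * ‖E‖ := by
    calc |⟪v, E v⟫| ≤ ‖v‖ * ‖E v‖ := abs_real_inner_le_norm _ _
    _ ≤ ‖v‖ * (‖E‖ * ‖v‖) := by
        gcongr; exact E.le_opNorm v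
    _ = ‖E‖ * (‖v‖ * ‖v‖) := by ring
    _ ≤ ‖E‖ * ((2 * c) * (2 * c)) := by
        gcongr
    _ = 4 * c ^ 2 * ‖E‖ := by ring
  rw [abs_le] at habs
  constructor <;> [nlinarith [habs.1, key]; nlinarith [habs.2, key]]
end

section
/- Let X_1, …, X_C be real-valued random variables defined on a common probability space such that for each j the law of X_j is the Gaussian distribution with mean μ_j and variance σ_j² (no independence or joint-Gaussianity assumption is made). Then E[log(∑_{j=1}^C exp(X_j))] ≤ log(∑_{j=1}^C exp(μ_j + σ_j²/2)). -/
/-!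
Jensen's inequality for the concave logarithm gives `E[log ∑ exp Xⱼ] ≤ log E[∑ exp Xⱼ]`, and by
linearity `E[∑ exp Xⱼ] = ∑ E[exp Xⱼ]`, where each `E[exp Xⱼ] = exp (mⱼ + vⱼ / 2)` is the Gaussian
moment generating function at `1`. Only the marginal laws enter, so no joint assumption is needed.
The logarithm is integrable because `Xⱼ ≤ log ∑ exp Xᵢ ≤ ∑ exp Xᵢ`.
-/

open MeasureTheory ProbabilityTheory Real

section

variable {Ω : Type*} [MeasurableSpace Ω] {μ : Measure Ω}

section Gaussian

variable {X : Ω → ℝ} {m : ℝ} {v : NNReal}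

lemma aemeasurable_of_map_eq_gaussianReal (hX : μ.map X = gaussianReal m v) : AEMeasurable X μ :=
  aemeasurable_of_map_neZero (by rw [hX]; infer_instance)

lemma integrable_of_map_eq_gaussianReal (hX : μ.map X = gaussianReal m v) : Integrable X μ :=
  (hX ▸ (memLp_id_gaussianReal 1).integrable le_rfl :
    Integrable id (μ.map X)).comp_aemeasurable (aemeasurable_of_map_eq_gaussianReal hX)

lemma integrable_exp_of_map_eq_gaussianReal (hX : μ.map X = gaussianReal m v) :
    Integrable (fun ω ↦ exp (X ω)) μ :=
  (hX ▸ by simpa using integrable_exp_mul_gaussianReal (μ := m) (v := v) 1 :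
    Integrable exp (μ.map X)).comp_aemeasurable (aemeasurable_of_map_eq_gaussianReal hX)

lemma integral_exp_of_map_eq_gaussianReal (hX : μ.map X = gaussianReal m v) :
    ∫ ω, exp (X ω) ∂μ = exp (m + v / 2) := by
  simpa [mgf] using mgf_gaussianReal hX 1

end Gaussian

lemma le_log_sum_exp {ι : Type*} {s : Finset ι} {x : ι → ℝ} {i : ι} (hi : i ∈ s) :
    x i ≤ log (∑ j ∈ s, exp (x j)) := by
  rw [le_log_iff_exp_le (Finset.sum_pos (fun j _ ↦ exp_pos _) ⟨i, hi⟩)]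
  exact Finset.single_le_sum (fun j _ ↦ (exp_pos (x j)).le) hi

lemma integrable_log_sum_exp {ι : Type*} [Fintype ι] {X : ι → Ω → ℝ}
    (hX : ∀ i, Integrable (X i) μ) (hexpX : ∀ i, Integrable (fun ω ↦ exp (X i ω)) μ) :
    Integrable (fun ω ↦ log (∑ i, exp (X i ω))) μ := by
  rcases isEmpty_or_nonempty ι with _ | ⟨⟨i₀⟩⟩
  · simp
  have hsum : Integrable (fun ω ↦ ∑ i, exp (X i ω)) μ := integrable_finsetSum _ fun i _ ↦ hexpX i
  refine ((hX i₀).abs.add hsum).mono' hsum.aemeasurable.log.aestronglyMeasurable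
    (ae_of_all _ fun ω ↦ ?_)
  have hsum_nonneg : 0 ≤ ∑ i, exp (X i ω) := Finset.sum_nonneg fun i _ ↦ (exp_pos _).le
  have hlower := le_log_sum_exp (x := fun i ↦ X i ω) (Finset.mem_univ i₀)
  have hupper := log_le_self hsum_nonneg
  rw [norm_eq_abs, abs_le, Pi.add_apply]
  constructor <;> linarith [neg_abs_le (X i₀ ω), abs_nonneg (X i₀ ω)]

lemma integral_log_le_log_integral [IsProbabilityMeasure μ] {Y : Ω → ℝ}
    (hY_pos : ∀ᵐ ω ∂μ, 0 < Y ω) (hY : Integrable Y μ)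
    (hlogY : Integrable (fun ω ↦ log (Y ω)) μ) :
    ∫ ω, log (Y ω) ∂μ ≤ log (∫ ω, Y ω ∂μ) := by
  set S := ∫ ω, Y ω ∂μ
  have hS : 0 < S := by
    refine (integral_pos_iff_support_of_nonneg_ae (hY_pos.mono fun _ h ↦ h.le) hY).2
      (pos_iff_ne_zero.2 fun h ↦ ?_)
    obtain ⟨ω, hω_zero, hω_pos⟩ := ((measure_eq_zero_iff_ae_notMem.1 h).and hY_pos).exists
    exact hω_zero (Function.mem_support.2 hω_pos.ne')
  -- the tangent line of `log` at `S` lies above its graph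
  have htangent : ∀ y, 0 < y → log y ≤ y / S + (log S - 1) := fun y hy ↦ by
    have := log_le_sub_one_of_pos (div_pos hy hS)
    rw [log_div hy.ne' hS.ne'] at this
    linarith
  calc ∫ ω, log (Y ω) ∂μ ≤ ∫ ω, Y ω / S + (log S - 1) ∂μ :=
        integral_mono_ae hlogY ((hY.div_const S).add (integrable_const _))
          (hY_pos.mono fun ω hω ↦ htangent _ hω)
    _ = log S := by
        rw [integral_add (hY.div_const S) (integrable_const _), integral_div, integral_const,
          div_self hS.ne']
        simp

end

theorem expected_log_sum_exp_gaussian_bound_general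
    {Ω : Type*} [MeasurableSpace Ω] (μ : Measure Ω) [IsProbabilityMeasure μ]
    {C : ℕ} (X : Fin C → Ω → ℝ)
    (m : Fin C → ℝ) (v : Fin C → NNReal)
    (hlaw : ∀ j, μ.map (X j) = gaussianReal (m j) (v j)) :
    ∫ ω, Real.log (∑ j, Real.exp (X j ω)) ∂μ
      ≤ Real.log (∑ j, Real.exp (m j + (v j : ℝ) / 2)) := by
  rcases isEmpty_or_nonempty (Fin C) with _ | _
  · simp
  have hexpX j := integrable_exp_of_map_eq_gaussianReal (hlaw j)
  calc ∫ ω, log (∑ j, exp (X j ω)) ∂μ ≤ log (∫ ω, ∑ j, exp (X j ω) ∂μ) :=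
        integral_log_le_log_integral
          (ae_of_all _ fun ω ↦ Finset.sum_pos (fun j _ ↦ exp_pos _) Finset.univ_nonempty)
          (integrable_finsetSum _ fun j _ ↦ hexpX j)
          (integrable_log_sum_exp (fun j ↦ integrable_of_map_eq_gaussianReal (hlaw j)) hexpX)
    _ = log (∑ j, exp (m j + v j / 2)) := by
        rw [integral_finsetSum _ fun j _ ↦ hexpX j]
        simp_rw [integral_exp_of_map_eq_gaussianReal (hlaw _)]

/-- If `X 1, …, X C` are real random variables on a common probability
space such that each `X j` has Gaussian law with mean `m j` and variance `v j` (no joint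
independence or joint Gaussianity assumed), then
`E[log ∑ j exp (X j)] ≤ log ∑ j exp (m j + v j / 2)`. -/
theorem expected_log_sum_exp_gaussian_bound
    {Ω : Type*} [MeasurableSpace Ω] (μ : Measure Ω) [IsProbabilityMeasure μ]
    {C : ℕ} (X : Fin C → Ω → ℝ)
    (hXmeas : ∀ j, Measurable (X j))
    (m : Fin C → ℝ) (v : Fin C → NNReal)
    (hlaw : ∀ j, μ.map (X j) = gaussianReal (m j) (v j)) :
    ∫ ω, Real.log (∑ j, Real.exp (X j ω)) ∂μ
      ≤ Real.log (∑ j, Real.exp (m j + (v j : ℝ) / 2)) :=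
  expected_log_sum_exp_gaussian_bound_general μ X m v hlaw
end

section
/- Let w_1, …, w_C ∈ ℝ^d, b ∈ ℝ^C, and fix a class label y ∈ {1, …, C}. Let f be a random vector in ℝ^d such that for every j ∈ {1, …, C} the scalar random variable (w_j − w_y)·f is Gaussian with mean m_j and variance τ_j² ≥ 0 (with the Gaussian of variance 0 understood as the Dirac mass; in particular m_y = 0 and τ_y = 0). Then the expected cross-entropy loss satisfies E[−log( exp(w_y·f + b_y) / ∑_{j=1}^C exp(w_j·f + b_j) )] ≤ log ∑_{j=1}^C exp( m_j + (b_j − b_y) + τ_j²/2 ). -/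
open MeasureTheory ProbabilityTheory Real
open scoped RealInnerProductSpace NNReal

/-!
With `X j = ⟪w j - w y, f⟫`, the loss is `log ∑ j, exp (X j + (b j - b y))`, and the sum is at
least `1` because its `y`-th term is `exp 0`. Jensen's inequality for the concave `log` on
`[1, ∞)` moves the expectation inside the logarithm, and the expectation of each term is the
moment generating function of the Gaussian `X j` at `1`, namely `exp (m j + τsq j / 2)` times
`exp (b j - b y)`.
-/

section GaussianExp

variable {Ω : Type*} [MeasurableSpace Ω] {μ : Measure Ω} {X : Ω → ℝ} {m : ℝ}
  {v : ℝ≥0}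

lemma integrable_exp_add_of_map_eq_gaussianReal (hX : μ.map X = gaussianReal m v) (c : ℝ) :
    Integrable (fun ω => exp (X ω + c)) μ := by
  have : NeZero μ := ⟨by
    rintro rfl
    exact IsProbabilityMeasure.ne_zero _ (Measure.map_zero X ▸ hX).symm⟩
  have hmgf : Integrable (fun ω => exp (1 * X ω)) μ := by
    rw [← mgf_pos_iff, mgf_gaussianReal hX]
    exact exp_pos _
  simpa [exp_add] using hmgf.mul_const (exp c)

lemma integral_exp_add_of_map_eq_gaussianReal (hX : μ.map X = gaussianReal m v) (c : ℝ) :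
    ∫ ω, exp (X ω + c) ∂μ = exp (m + c + v / 2) := by
  have hmgf : ∫ ω, exp (1 * X ω) ∂μ = exp (m * 1 + v * 1 ^ 2 / 2) := mgf_gaussianReal hX 1
  simp only [one_mul, mul_one, one_pow] at hmgf
  simp only [exp_add, integral_mul_const, hmgf]
  ring

end GaussianExp

lemma integral_log_le_log_integral_s5 {Ω : Type*} [MeasurableSpace Ω] {μ : Measure Ω}
    [IsProbabilityMeasure μ] {G : Ω → ℝ} (hG : Integrable G μ) (hG1 : ∀ᵐ ω ∂μ, 1 ≤ G ω) :
    ∫ ω, log (G ω) ∂μ ≤ log (∫ ω, G ω ∂μ) := by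
  have hconc : ConcaveOn ℝ (Set.Ici 1) log :=
    strictConcaveOn_log_Ioi.concaveOn.subset
      (fun x hx => Set.mem_Ioi.2 (lt_of_lt_of_le one_pos hx)) (convex_Ici 1)
  have hcont : ContinuousOn log (Set.Ici 1) :=
    continuousOn_log.mono fun x hx => ne_of_gt (lt_of_lt_of_le one_pos hx)
  -- `0 ≤ log G ≤ G - 1` dominates `log ∘ G` by `G`.
  have hlogG : Integrable (log ∘ G) μ := by
    refine hG.mono' (measurable_log.comp_aemeasurable hG.aemeasurable).aestronglyMeasurable ?_
    filter_upwards [hG1] with ω hω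
    rw [Function.comp_apply, norm_eq_abs, abs_of_nonneg (log_nonneg hω)]
    linarith [log_le_sub_one_of_pos (lt_of_lt_of_le one_pos hω)]
  exact hconc.le_map_integral hcont isClosed_Ici hG1 hG hlogG

section CrossEntropy

variable {ι : Type*} [Fintype ι] (z : ι → ℝ) (y : ι)

lemma neg_log_exp_div_sum_exp :
    -log (exp (z y) / ∑ j, exp (z j)) = log (∑ j, exp (z j - z y)) := by
  have hS : 0 < ∑ j, exp (z j) :=
    Finset.sum_pos (fun j _ => exp_pos (z j)) ⟨y, Finset.mem_univ y⟩
  rw [show ∑ j, exp (z j - z y) = (∑ j, exp (z j)) / exp (z y) by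
      simp only [exp_sub, Finset.sum_div],
    log_div hS.ne' (exp_pos _).ne', log_div (exp_pos _).ne' hS.ne', neg_sub]

lemma one_le_sum_exp_sub : 1 ≤ ∑ j, exp (z j - z y) := by
  calc (1 : ℝ) = exp (z y - z y) := by simp
    _ ≤ ∑ j, exp (z j - z y) :=
      Finset.single_le_sum (f := fun j => exp (z j - z y)) (fun j _ => (exp_pos _).le)
        (Finset.mem_univ y)

end CrossEntropy

theorem expected_cross_entropy_gaussian_augmentation_bound_general
    {Ω : Type*} [MeasurableSpace Ω] (μ : Measure Ω) [IsProbabilityMeasure μ]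
    {d C : ℕ} (w : Fin C → EuclideanSpace ℝ (Fin d)) (b : Fin C → ℝ) (y : Fin C)
    (f : Ω → EuclideanSpace ℝ (Fin d))
    (m : Fin C → ℝ) (τsq : Fin C → NNReal)
    (hlaw : ∀ j, μ.map (fun ω => ⟪w j - w y, f ω⟫) = gaussianReal (m j) (τsq j)) :
    ∫ ω, -Real.log
        (Real.exp (⟪w y, f ω⟫ + b y) / ∑ j, Real.exp (⟪w j, f ω⟫ + b j)) ∂μ
      ≤ Real.log (∑ j, Real.exp (m j + (b j - b y) + (τsq j : ℝ) / 2)) := by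
  set z : Ω → Fin C → ℝ := fun ω j => ⟪w j, f ω⟫ + b j
  have hz : ∀ ω j, z ω j - z ω y = ⟪w j - w y, f ω⟫ + (b j - b y) := fun ω j => by
    simp only [z, inner_sub_left]; ring
  have hint : ∀ j, Integrable (fun ω => exp (z ω j - z ω y)) μ := fun j => by
    simpa only [hz] using integrable_exp_add_of_map_eq_gaussianReal (hlaw j) (b j - b y)
  calc ∫ ω, -log (exp (z ω y) / ∑ j, exp (z ω j)) ∂μ
      = ∫ ω, log (∑ j, exp (z ω j - z ω y)) ∂μ := by
        simp only [neg_log_exp_div_sum_exp]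
    _ ≤ log (∫ ω, ∑ j, exp (z ω j - z ω y) ∂μ) :=
        integral_log_le_log_integral_s5 (integrable_finsetSum _ fun j _ => hint j)
          (ae_of_all _ fun ω => one_le_sum_exp_sub (z ω) y)
    _ = log (∑ j, exp (m j + (b j - b y) + (τsq j : ℝ) / 2)) := by
        rw [integral_finsetSum _ fun j _ => hint j]
        simp only [hz, integral_exp_add_of_map_eq_gaussianReal (hlaw _)]

/-- Classifier weights `w 1, …, w C ∈ ℝ^d`, biases `b ∈ ℝ^C`, a true
class `y`, and a random feature vector `f` such that each scalar `(w j − w y)·f` is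
Gaussian with mean `m j` and variance `τsq j` (Dirac at the mean when the variance is 0;
in particular `m y = 0` and `τsq y = 0`).  Then the expected cross-entropy loss is at most
`log ∑ j exp (m j + (b j − b y) + τsq j / 2)`. -/
theorem expected_cross_entropy_gaussian_augmentation_bound
    {Ω : Type*} [MeasurableSpace Ω] (μ : Measure Ω) [IsProbabilityMeasure μ]
    {d C : ℕ} (w : Fin C → EuclideanSpace ℝ (Fin d)) (b : Fin C → ℝ) (y : Fin C)
    (f : Ω → EuclideanSpace ℝ (Fin d)) (hfmeas : Measurable f)
    (m : Fin C → ℝ) (τsq : Fin C → NNReal)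
    (hlaw : ∀ j, μ.map (fun ω => ⟪w j - w y, f ω⟫) = gaussianReal (m j) (τsq j))
    (hmy : m y = 0) (hτy : τsq y = 0) :
    ∫ ω, -Real.log
        (Real.exp (⟪w y, f ω⟫ + b y) / ∑ j, Real.exp (⟪w j, f ω⟫ + b j)) ∂μ
      ≤ Real.log (∑ j, Real.exp (m j + (b j - b y) + (τsq j : ℝ) / 2)) :=
  expected_cross_entropy_gaussian_augmentation_bound_general μ w b y f m τsq hlaw
end
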